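/- For any two distributions F and G, the plus (resp. minus) dispersion component of the p-Wasserstein decomposition is strictly positive if and only if the corresponding dispersion component of the AVM decomposition is strictly positive, and this is also equivalent to strict positivity of the corresponding dispersion component of the Cramér distance decomposition. -/

import Mathlib

open MeasureTheory
open scoped ENNReal

/-- Signed `p`-th power `z^{[p]} = sgn(z)·|z|^p`. -/
noncomputable def sgnPow (p : ℕ) (z : ℝ) : ℝ := Real.sign z * |z| ^ p

/-- `Disp₊^{WD_p}` component, as a lower Lebesgue integral. -/
noncomputable def wdDispPlusL (p : ℕ) (qF qG : ℝ → ℝ) : ℝ≥0∞ :=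
  (1 / 2 : ℝ≥0∞) * ∫⁻ α in Set.Ioo (0:ℝ) 1,
    ENNReal.ofReal (max (sgnPow p (qF ((1 + α) / 2) - qG ((1 + α) / 2)) -
                         sgnPow p (qF ((1 - α) / 2) - qG ((1 - α) / 2))) 0)

/-- `Disp₊^{CD}` component, as a lower Lebesgue integral. -/
noncomputable def cdDispPlusL (qF qG : ℝ → ℝ) : ℝ≥0∞ :=
  (1 / 2 : ℝ≥0∞) * ∫⁻ β in Set.Ioo (0:ℝ) 1, ∫⁻ α in Set.Ioo (0:ℝ) β,
    ENNReal.ofReal (max ((qF ((1 + α) / 2) - qG ((1 + β) / 2)) -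
                         (qF ((1 - α) / 2) - qG ((1 - β) / 2))) 0)

/-! Write `A`, `B` for the interquantile ranges `α ↦ q((1+α)/2) - q((1-α)/2)` of the two quantile
functions; both are nondecreasing. Since `z ↦ z^{[p]}` is strictly increasing, the `WD_p` integrand
is positive exactly where `A α > B α`, so for every `p ≥ 1` the plus component is positive iff
`{A > B}` is not null. The Cramér integrand is `[A α - B β]₊` with `α < β`, so it vanishes when
`A ≤ B` a.e. Conversely, pick `β₀` with `A β₀ > B β₀` at which the monotone `B` is continuous
(all but countably many points qualify): for `β₀ < α < β` with `β` close to `β₀`, `A α - B β`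
stays above a positive constant, which gives a rectangle of positive Cramér mass. -/

open Set Filter Topology

lemma sgnPow_of_nonneg {p : ℕ} (hp : p ≠ 0) {z : ℝ} (hz : 0 ≤ z) : sgnPow p z = z ^ p := by
  rcases hz.eq_or_lt with rfl | hz
  · simp [sgnPow, hp]
  · simp [sgnPow, Real.sign_of_pos hz, abs_of_pos hz]

lemma sgnPow_neg (p : ℕ) (z : ℝ) : sgnPow p (-z) = -sgnPow p z := by
  simp [sgnPow, Real.sign_neg]

lemma sgnPow_strictMono {p : ℕ} (hp : p ≠ 0) : StrictMono (sgnPow p) :=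
  strictMono_of_odd_strictMonoOn_nonneg (sgnPow_neg p) <|
    (pow_left_strictMonoOn₀ hp).congr fun _ hz => (sgnPow_of_nonneg hp hz).symm

noncomputable def interquantileRange (q : ℝ → ℝ) (α : ℝ) : ℝ := q ((1 + α) / 2) - q ((1 - α) / 2)

lemma monotoneOn_upperQuantile {q : ℝ → ℝ} (hq : MonotoneOn q (Ioo 0 1)) :
    MonotoneOn (fun α : ℝ => q ((1 + α) / 2)) (Ioo 0 1) :=
  fun a ha b hb hab => hq ⟨by linarith [ha.1], by linarith [ha.2]⟩
    ⟨by linarith [hb.1], by linarith [hb.2]⟩ (by linarith)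

lemma antitoneOn_lowerQuantile {q : ℝ → ℝ} (hq : MonotoneOn q (Ioo 0 1)) :
    AntitoneOn (fun α : ℝ => q ((1 - α) / 2)) (Ioo 0 1) :=
  fun a ha b hb hab => hq ⟨by linarith [hb.2], by linarith [hb.1]⟩
    ⟨by linarith [ha.2], by linarith [ha.1]⟩ (by linarith)

lemma monotoneOn_interquantileRange {q : ℝ → ℝ} (hq : MonotoneOn q (Ioo 0 1)) :
    MonotoneOn (interquantileRange q) (Ioo 0 1) :=
  fun _ ha _ hb hab => sub_le_sub (monotoneOn_upperQuantile hq ha hb hab)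
    (antitoneOn_lowerQuantile hq ha hb hab)

lemma MonotoneOn.ae_continuousAt {f : ℝ → ℝ} {s : Set ℝ} (hs : IsOpen s) (hf : MonotoneOn f s) :
    ∀ᵐ x ∂volume.restrict s, ContinuousAt f x := by
  filter_upwards [ae_restrict_mem hs.measurableSet,
    ae_restrict_of_ae (hf.countable_not_continuousWithinAt.ae_notMem volume)] with x hxs hx
  by_contra hcont
  exact hx ⟨hxs, fun h => hcont (h.continuousAt (hs.mem_nhds hxs))⟩

lemma wdDispPlusL_eq_zero_iff {p : ℕ} (hp : p ≠ 0) {qF qG : ℝ → ℝ}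
    (hF : MonotoneOn qF (Ioo 0 1)) (hG : MonotoneOn qG (Ioo 0 1)) :
    wdDispPlusL p qF qG = 0 ↔
      ∀ᵐ α ∂volume.restrict (Ioo (0:ℝ) 1), interquantileRange qF α ≤ interquantileRange qG α := by
  have integrand_eq_zero_iff (α : ℝ) :
      ENNReal.ofReal (max (sgnPow p (qF ((1 + α) / 2) - qG ((1 + α) / 2)) -
        sgnPow p (qF ((1 - α) / 2) - qG ((1 - α) / 2))) 0) = 0 ↔
      interquantileRange qF α ≤ interquantileRange qG α := by
    simp only [ENNReal.ofReal_eq_zero, max_le_iff, le_refl, and_true, sub_nonpos,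
      (sgnPow_strictMono hp).le_iff_le, interquantileRange]
    constructor <;> intro h <;> linarith
  have hquantiles (q : ℝ → ℝ) (hq : MonotoneOn q (Ioo 0 1)) :
      AEMeasurable (fun α : ℝ => q ((1 + α) / 2)) (volume.restrict (Ioo 0 1)) ∧
      AEMeasurable (fun α : ℝ => q ((1 - α) / 2)) (volume.restrict (Ioo 0 1)) :=
    ⟨aemeasurable_restrict_of_monotoneOn measurableSet_Ioo (monotoneOn_upperQuantile hq),
      aemeasurable_restrict_of_antitoneOn measurableSet_Ioo (antitoneOn_lowerQuantile hq)⟩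
  obtain ⟨hFup, hFlo⟩ := hquantiles qF hF
  obtain ⟨hGup, hGlo⟩ := hquantiles qG hG
  have hsgn : Measurable (sgnPow p) := (sgnPow_strictMono hp).monotone.measurable
  rw [wdDispPlusL, mul_eq_zero, or_iff_right (by norm_num)]
  refine (lintegral_eq_zero_iff' ?_).trans (eventually_congr (.of_forall integrand_eq_zero_iff))
  exact ENNReal.measurable_ofReal.comp_aemeasurable (((hsgn.comp_aemeasurable (hFup.sub hGup)).sub
    (hsgn.comp_aemeasurable (hFlo.sub hGlo))).max aemeasurable_const)

lemma cdDispPlusL_eq_lintegral_interquantileRange (qF qG : ℝ → ℝ) :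
    cdDispPlusL qF qG = (1 / 2 : ℝ≥0∞) * ∫⁻ β in Ioo (0:ℝ) 1, ∫⁻ α in Ioo (0:ℝ) β,
      ENNReal.ofReal (interquantileRange qF α - interquantileRange qG β) := by
  rw [cdDispPlusL]
  congr! 5 with β α
  rw [ENNReal.ofReal_max, ENNReal.ofReal_zero, max_eq_left zero_le, interquantileRange,
    interquantileRange]
  ring_nf

lemma cdDispPlusL_eq_zero_of_ae_le {qF qG : ℝ → ℝ} (hF : MonotoneOn qF (Ioo 0 1))
    (h : ∀ᵐ β ∂volume.restrict (Ioo (0:ℝ) 1), interquantileRange qF β ≤ interquantileRange qG β) :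
    cdDispPlusL qF qG = 0 := by
  rw [cdDispPlusL_eq_lintegral_interquantileRange, lintegral_congr_ae (g := fun _ => 0),
    lintegral_zero, mul_zero]
  filter_upwards [h, ae_restrict_mem measurableSet_Ioo] with β hβ hβ01
  refine setLIntegral_eq_zero measurableSet_Ioo fun α hα => ENNReal.ofReal_eq_zero.2 ?_
  have hαβ := monotoneOn_interquantileRange hF ⟨hα.1, hα.2.trans hβ01.2⟩ hβ01 hα.2.le
  linarith

lemma cdDispPlusL_pos_of_lt {qF qG : ℝ → ℝ} (hF : MonotoneOn qF (Ioo 0 1)) {β₀ : ℝ}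
    (hβ₀ : β₀ ∈ Ioo (0:ℝ) 1) (hG : ContinuousAt (interquantileRange qG) β₀)
    (hlt : interquantileRange qG β₀ < interquantileRange qF β₀) :
    0 < cdDispPlusL qF qG := by
  set c := (interquantileRange qG β₀ + interquantileRange qF β₀) / 2
  set ε := interquantileRange qF β₀ - c
  have hε : 0 < ε := by simp only [ε, c]; linarith
  have hnear : ∀ᶠ β in 𝓝[>] β₀, interquantileRange qG β < c ∧ β < 1 :=
    ((hG.tendsto.mono_left nhdsWithin_le_nhds).eventually_lt_const (by simp only [c]; linarith)).and
      (nhdsWithin_le_nhds (Iio_mem_nhds hβ₀.2))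
  obtain ⟨u, hβ₀u, hu⟩ := mem_nhdsGT_iff_exists_Ioo_subset.1 hnear
  set m := (β₀ + u) / 2
  have hm : β₀ < m ∧ m < u := by
    have : β₀ < u := hβ₀u
    constructor <;> simp only [m] <;> linarith
  have hbound : ∀ β ∈ Ioo m u, ∀ α ∈ Ioo β₀ m,
      ENNReal.ofReal ε ≤ ENNReal.ofReal (interquantileRange qF α - interquantileRange qG β) := by
    intro β hβ α hα
    have hα1 : α < 1 := (hu ⟨hα.1, hα.2.trans hm.2⟩).2
    have hGβ := (hu ⟨hm.1.trans hβ.1, hβ.2⟩).1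
    have hFα := monotoneOn_interquantileRange hF hβ₀ ⟨hβ₀.1.trans hα.1, hα1⟩ hα.1.le
    exact ENNReal.ofReal_le_ofReal (by linarith)
  calc (0 : ℝ≥0∞)
      < 1 / 2 * (ENNReal.ofReal ε * volume (Ioo β₀ m) * volume (Ioo m u)) := by
        simp [Real.volume_Ioo, hε, hm.1, hm.2]
    _ = 1 / 2 * ∫⁻ β in Ioo m u, ∫⁻ α in Ioo β₀ m, ENNReal.ofReal ε := by
        simp only [setLIntegral_const]
    _ ≤ 1 / 2 * ∫⁻ β in Ioo (0:ℝ) 1, ∫⁻ α in Ioo (0:ℝ) β,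
          ENNReal.ofReal (interquantileRange qF α - interquantileRange qG β) := by
        gcongr 1 / 2 * ?_
        calc _ ≤ ∫⁻ β in Ioo m u, ∫⁻ α in Ioo (0:ℝ) β,
                ENNReal.ofReal (interquantileRange qF α - interquantileRange qG β) :=
              setLIntegral_mono' measurableSet_Ioo fun β hβ =>
                (setLIntegral_mono' measurableSet_Ioo (hbound β hβ)).trans
                  (lintegral_mono_set (Ioo_subset_Ioo hβ₀.1.le hβ.1.le))
          _ ≤ _ := lintegral_mono_set fun β (hβ : β ∈ Ioo m u) => show β ∈ Ioo 0 1 from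
                ⟨hβ₀.1.trans (hm.1.trans hβ.1), (hu ⟨hm.1.trans hβ.1, hβ.2⟩).2⟩
    _ = cdDispPlusL qF qG := (cdDispPlusL_eq_lintegral_interquantileRange qF qG).symm

lemma cdDispPlusL_eq_zero_iff {qF qG : ℝ → ℝ}
    (hF : MonotoneOn qF (Ioo 0 1)) (hG : MonotoneOn qG (Ioo 0 1)) :
    cdDispPlusL qF qG = 0 ↔
      ∀ᵐ α ∂volume.restrict (Ioo (0:ℝ) 1), interquantileRange qF α ≤ interquantileRange qG α := by
  refine ⟨fun h0 => ?_, cdDispPlusL_eq_zero_of_ae_le hF⟩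
  by_contra hle
  simp only [not_eventually, not_le] at hle
  obtain ⟨β₀, hlt, hβ₀, hcont⟩ := (hle.and_eventually ((ae_restrict_mem measurableSet_Ioo).and
    ((monotoneOn_interquantileRange hG).ae_continuousAt isOpen_Ioo))).exists
  exact (cdDispPlusL_pos_of_lt hF hβ₀ hcont hlt).ne' h0

theorem disp_positivity_agreement (p : ℕ) (hp : 1 ≤ p) (qF qG : ℝ → ℝ)
    (hF : MonotoneOn qF (Set.Ioo 0 1)) (hG : MonotoneOn qG (Set.Ioo 0 1)) :
    ((0 < wdDispPlusL p qF qG ↔ 0 < wdDispPlusL 1 qF qG) ∧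
      (0 < wdDispPlusL 1 qF qG ↔ 0 < cdDispPlusL qF qG)) ∧
    ((0 < wdDispPlusL p qG qF ↔ 0 < wdDispPlusL 1 qG qF) ∧
      (0 < wdDispPlusL 1 qG qF ↔ 0 < cdDispPlusL qG qF)) := by
  have hp0 : p ≠ 0 := by omega
  simp only [pos_iff_ne_zero, ne_eq, wdDispPlusL_eq_zero_iff hp0 hF hG,
    wdDispPlusL_eq_zero_iff hp0 hG hF, wdDispPlusL_eq_zero_iff one_ne_zero hF hG,
    wdDispPlusL_eq_zero_iff one_ne_zero hG hF, cdDispPlusL_eq_zero_iff hF hG,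
    cdDispPlusL_eq_zero_iff hG hF, and_self]
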